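/- arXiv:1909.12485 — 2 statements merged into one kernel-verified Lean document; each statement's English description precedes it below -/
import Mathlib

section
/- With the same setup, the geodesic curvature function k_g of the vortex lines, glued to a smooth function on Σ, equals the divergence of −n_g with respect to μ_Σ; consequently ∫_Σ k_g μ_Σ = 0. -/
open Real Matrix intervalIntegral

open MeasureTheory

-- helpers
lemma hasDerivAt_slice1 {E : Type*} [NormedAddCommGroup E] [NormedSpace ℝ E]
    {g : ℝ × ℝ → E} {u v : ℝ} (hg : DifferentiableAt ℝ g (u, v)) :
    HasDerivAt (fun x => g (x, v)) (fderiv ℝ g (u, v) (1, 0)) u := by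
  have h1 : HasDerivAt (fun x : ℝ => ((x, v) : ℝ × ℝ)) (1, 0) u :=
    (hasDerivAt_id u).prodMk (hasDerivAt_const u v)
  exact hg.hasFDerivAt.comp_hasDerivAt u h1

lemma hasDerivAt_slice2 {E : Type*} [NormedAddCommGroup E] [NormedSpace ℝ E]
    {g : ℝ × ℝ → E} {u v : ℝ} (hg : DifferentiableAt ℝ g (u, v)) :
    HasDerivAt (fun y => g (u, y)) (fderiv ℝ g (u, v) (0, 1)) v := by
  have h1 : HasDerivAt (fun y : ℝ => ((u, y) : ℝ × ℝ)) (0, 1) v :=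
    (hasDerivAt_const v u).prodMk (hasDerivAt_id v)
  exact hg.hasFDerivAt.comp_hasDerivAt v h1

lemma HasDerivAt.dot3 {X Y : ℝ → Fin 3 → ℝ} {X' Y' : Fin 3 → ℝ} {t : ℝ}
    (hX : HasDerivAt X X' t) (hY : HasDerivAt Y Y' t) :
    HasDerivAt (fun s => X s ⬝ᵥ Y s) (X' ⬝ᵥ Y t + X t ⬝ᵥ Y' ) t := by
  simp only [dotProduct, Finset.sum_add_distrib.symm]
  apply HasDerivAt.fun_sum
  intro i _
  have hXi : HasDerivAt (fun s => X s i) (X' i) t :=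
    ((ContinuousLinearMap.proj i : (Fin 3 → ℝ) →L[ℝ] ℝ).hasFDerivAt).comp_hasDerivAt t hX
  have hYi : HasDerivAt (fun s => Y s i) (Y' i) t :=
    ((ContinuousLinearMap.proj i : (Fin 3 → ℝ) →L[ℝ] ℝ).hasFDerivAt).comp_hasDerivAt t hY
  simpa [mul_comm] using hXi.fun_mul hYi

lemma continuous_dot3 {α : Type*} [TopologicalSpace α] {X Y : α → Fin 3 → ℝ}
    (hX : Continuous X) (hY : Continuous Y) : Continuous fun t => X t ⬝ᵥ Y t := by
  simp only [dotProduct]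
  exact continuous_finset_sum _ fun i _ =>
    ((continuous_apply i).comp hX).mul ((continuous_apply i).comp hY)

lemma lagrange3 (x y : Fin 3 → ℝ) :
    crossProduct x y ⬝ᵥ crossProduct x y = (x ⬝ᵥ x) * (y ⬝ᵥ y) - (x ⬝ᵥ y) ^ 2 := by
  simp [cross_apply, dotProduct, Fin.sum_univ_three]
  ring

lemma dot3_self_nonneg (x : Fin 3 → ℝ) : 0 ≤ x ⬝ᵥ x := by
  simp only [dotProduct, Fin.sum_univ_three]
  nlinarith [sq_nonneg (x 0), sq_nonneg (x 1), sq_nonneg (x 2)]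

lemma swap_int3 {q : ℝ × ℝ → ℝ} (hq : Continuous q) {c : ℝ} (hc : 0 ≤ c) :
    (∫ u in (0:ℝ)..c, ∫ v in (0:ℝ)..c, q (u, v)) =
      ∫ v in (0:ℝ)..c, ∫ u in (0:ℝ)..c, q (u, v) := by
  simp_rw [intervalIntegral.integral_of_le hc]
  apply MeasureTheory.integral_integral_swap
  have h1 : IntegrableOn q (Set.Ioc 0 c ×ˢ Set.Ioc 0 c) volume :=
    (hq.continuousOn.integrableOn_compact (isCompact_Icc.prod isCompact_Icc)).mono_set
      (Set.prod_mono Set.Ioc_subset_Icc_self Set.Ioc_subset_Icc_self)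
  rw [Measure.prod_restrict]
  rw [← Measure.volume_eq_prod] at *
  exact h1

/-- in (doubly `2π`-periodic) coordinates `(u,v)` on the genus-one surface
`Σ ⊂ ℝ³` parametrized by `f`, fibered by the vortex lines `u = const` (tangent unit
field `T`), with Riemannian area density `W = ‖∂_u f × ∂_v f‖`, Darboux normal
`n_g = a ∂_u f + b ∂_v f` (unit, orthogonal to `T`, positively transverse: `a > 0`), and
geodesic curvature `k_g = (∇_T T)·n_g` of the vortex lines glued to a function on `Σ`:
`k_g` equals the divergence of `−n_g` with respect to `μ_Σ = W du dv`, i.e.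
`k_g W = −(∂_u(W a) + ∂_v(W b))`; consequently `∫_Σ k_g μ_Σ = 0`. -/
theorem stmt_5 (f : ℝ → ℝ → Fin 3 → ℝ) (a b kg W : ℝ → ℝ → ℝ)
    (T ng : ℝ → ℝ → Fin 3 → ℝ)
    (hf : ContDiff ℝ (⊤ : ℕ∞) fun p : ℝ × ℝ => f p.1 p.2)
    (ha : ContDiff ℝ (⊤ : ℕ∞) fun p : ℝ × ℝ => a p.1 p.2)
    (hb : ContDiff ℝ (⊤ : ℕ∞) fun p : ℝ × ℝ => b p.1 p.2)
    (hfu : ∀ u v, f (u + 2 * π) v = f u v) (hfv : ∀ u v, f u (v + 2 * π) = f u v)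
    (hau : ∀ u v, a (u + 2 * π) v = a u v) (hav : ∀ u v, a u (v + 2 * π) = a u v)
    (hbu : ∀ u v, b (u + 2 * π) v = b u v) (hbv : ∀ u v, b u (v + 2 * π) = b u v)
    (hW : ∀ u v, W u v = Real.sqrt
      (crossProduct (deriv (fun x => f x v) u) (deriv (f u) v) ⬝ᵥ
        crossProduct (deriv (fun x => f x v) u) (deriv (f u) v)))
    (hWpos : ∀ u v, 0 < W u v)
    (hT : ∀ u v, T u v =
      (Real.sqrt (deriv (f u) v ⬝ᵥ deriv (f u) v))⁻¹ • deriv (f u) v)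
    (hng : ∀ u v, ng u v = a u v • deriv (fun x => f x v) u + b u v • deriv (f u) v)
    (hng1 : ∀ u v, ng u v ⬝ᵥ ng u v = 1)
    (hng2 : ∀ u v, ng u v ⬝ᵥ T u v = 0)
    (hapos : ∀ u v, 0 < a u v)
    (hkg : ∀ u v, kg u v =
      (Real.sqrt (deriv (f u) v ⬝ᵥ deriv (f u) v))⁻¹ *
        (deriv (fun y => T u y) v ⬝ᵥ ng u v)) :
    (∀ u v, kg u v * W u v =
      -(deriv (fun x => W x v * a x v) u + deriv (fun y => W u y * b u y) v)) ∧
    (∫ u in (0:ℝ)..(2 * π), ∫ v in (0:ℝ)..(2 * π), kg u v * W u v) = 0 := by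
  set P : ℝ × ℝ → Fin 3 → ℝ := fun p => f p.1 p.2 with hPdef
  have hPd : ∀ p, DifferentiableAt ℝ P p := fun p => (hf.differentiable (by simp)).differentiableAt
  set Fu : ℝ × ℝ → Fin 3 → ℝ := fun p => fderiv ℝ P p (1, 0) with hFudef
  set Fv : ℝ × ℝ → Fin 3 → ℝ := fun p => fderiv ℝ P p (0, 1) with hFvdef
  have hFu1 : ContDiff ℝ 1 Fu := (hf.fderiv_right (WithTop.coe_le_coe.2 le_top)).clm_apply contDiff_const
  have hFv1 : ContDiff ℝ 1 Fv := (hf.fderiv_right (WithTop.coe_le_coe.2 le_top)).clm_apply contDiff_const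
  have hFud : ∀ p, DifferentiableAt ℝ Fu p := fun p => (hFu1.differentiable one_ne_zero).differentiableAt
  have hFvd : ∀ p, DifferentiableAt ℝ Fv p := fun p => (hFv1.differentiable one_ne_zero).differentiableAt
  have hdu : ∀ u v, HasDerivAt (fun x => f x v) (Fu (u, v)) u :=
    fun u v => hasDerivAt_slice1 (hPd (u, v))
  have hdv : ∀ u v, HasDerivAt (f u) (Fv (u, v)) v :=
    fun u v => hasDerivAt_slice2 (hPd (u, v))
  have hfu_eq : ∀ u v, deriv (fun x => f x v) u = Fu (u, v) := fun u v => (hdu u v).deriv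
  have hfv_eq : ∀ u v, deriv (f u) v = Fv (u, v) := fun u v => (hdv u v).deriv
  -- mixed partials
  have hD1 : ContDiff ℝ 1 (fderiv ℝ P) := hf.fderiv_right (WithTop.coe_le_coe.2 le_top)
  have hmix : ∀ (w z : ℝ × ℝ) (p : ℝ × ℝ),
      fderiv ℝ (fun q => fderiv ℝ P q w) p z = fderiv ℝ (fderiv ℝ P) p z w := by
    intro w z p
    rw [fderiv_clm_apply (hD1.differentiable one_ne_zero p) (differentiableAt_const w)]
    simp
  set fuv : ℝ × ℝ → Fin 3 → ℝ := fun p => fderiv ℝ Fu p (0, 1) with hfuvdef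
  set fvv : ℝ × ℝ → Fin 3 → ℝ := fun p => fderiv ℝ Fv p (0, 1) with hfvvdef
  have hFv_u : ∀ p, fderiv ℝ Fv p (1, 0) = fuv p := by
    intro p
    rw [hfuvdef]
    simp only [hFudef, hFvdef]
    rw [hmix, hmix]
    exact (hf.contDiffAt.isSymmSndFDerivAt (by simp; exact WithTop.coe_le_coe.2 le_top)) _ _
  -- scalar coefficient functions
  set gg : ℝ × ℝ → ℝ := fun p => Fv p ⬝ᵥ Fv p with hggdef
  set hh : ℝ × ℝ → ℝ := fun p => Fu p ⬝ᵥ Fv p with hhhdef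
  set ee : ℝ × ℝ → ℝ := fun p => Fu p ⬝ᵥ Fu p with heedef
  -- pointwise positivity and algebraic identities
  have hW2 : ∀ u v, W u v ^ 2 = ee (u, v) * gg (u, v) - hh (u, v) ^ 2 := by
    intro u v
    rw [hW u v, Real.sq_sqrt (dot3_self_nonneg _), lagrange3, hfu_eq, hfv_eq]
  have hggpos : ∀ u v, 0 < gg (u, v) := by
    intro u v
    have h1 : 0 < W u v ^ 2 := pow_pos (hWpos u v) 2
    rw [hW2 u v] at h1
    nlinarith [dot3_self_nonneg (Fu (u, v)), sq_nonneg (hh (u, v)),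
      (by simp only [heedef] : ee (u,v) = Fu (u,v) ⬝ᵥ Fu (u,v))]
  have hsgpos : ∀ u v, 0 < Real.sqrt (gg (u, v)) := fun u v => Real.sqrt_pos.2 (hggpos u v)
  have hsgsq : ∀ u v, Real.sqrt (gg (u, v)) ^ 2 = gg (u, v) :=
    fun u v => Real.sq_sqrt (hggpos u v).le
  -- orthogonality: a*hh + b*gg = 0
  have horth : ∀ u v, a u v * hh (u, v) + b u v * gg (u, v) = 0 := by
    intro u v
    have h2 := hng2 u v
    rw [hng u v, hT u v, hfu_eq, hfv_eq] at h2
    simp only [dotProduct_smul, add_dotProduct, smul_dotProduct, smul_eq_mul] at h2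
    have hs : (Real.sqrt (Fv (u,v) ⬝ᵥ Fv (u,v)))⁻¹ ≠ 0 := by
      have := hsgpos u v
      simp only [hggdef] at this
      positivity
    simp only [hggdef, hhhdef]
    rcases mul_eq_zero.1 h2 with h | h
    · exact absurd h hs
    · linarith [h]
  have hnorm : ∀ u v, a u v ^ 2 * ee (u, v) + 2 * a u v * b u v * hh (u, v)
      + b u v ^ 2 * gg (u, v) = 1 := by
    intro u v
    have h1 := hng1 u v
    rw [hng u v, hfu_eq, hfv_eq] at h1
    simp only [add_dotProduct, dotProduct_add, smul_dotProduct, dotProduct_smul,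
      smul_eq_mul] at h1
    simp only [heedef, hhhdef, hggdef]
    have hc : Fv (u, v) ⬝ᵥ Fu (u, v) = Fu (u, v) ⬝ᵥ Fv (u, v) := dotProduct_comm _ _
    rw [hc] at h1
    linear_combination h1
  -- W*a = sqrt gg ; W*b = -hh/sqrt gg
  have hWa : ∀ u v, W u v * a u v = Real.sqrt (gg (u, v)) := by
    intro u v
    have key : (W u v * a u v) ^ 2 = gg (u, v) := by
      have h1 := horth u v
      have h2 := hnorm u v
      have h3 := hW2 u v
      nlinarith [h1, h2, h3]
    rw [← key, Real.sqrt_sq (mul_pos (hWpos u v) (hapos u v)).le]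
  have hWb : ∀ u v, W u v * b u v = -(hh (u, v) / Real.sqrt (gg (u, v))) := by
    intro u v
    have hs := (hsgpos u v).ne'
    have h1 : (W u v * b u v) * gg (u, v) = -(hh (u, v)) * Real.sqrt (gg (u, v)) := by
      linear_combination W u v * horth u v - hh (u, v) * hWa u v
    rw [← neg_div, eq_div_iff hs]
    apply mul_right_cancel₀ hs
    linear_combination h1 + (W u v * b u v) * hsgsq u v
  -- coordinate derivatives of Fu, Fv
  have hFu_dv : ∀ u v, HasDerivAt (fun y => Fu (u, y)) (fuv (u, v)) v :=
    fun u v => hasDerivAt_slice2 (hFud (u, v))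
  have hFv_dv : ∀ u v, HasDerivAt (fun y => Fv (u, y)) (fvv (u, v)) v :=
    fun u v => hasDerivAt_slice2 (hFvd (u, v))
  have hFv_du : ∀ u v, HasDerivAt (fun x => Fv (x, v)) (fuv (u, v)) u := by
    intro u v
    have h := hasDerivAt_slice1 (hFvd (u, v))
    rwa [hFv_u] at h
  -- derivatives of gg and hh
  have hgg_du : ∀ u v, HasDerivAt (fun x => gg (x, v)) (2 * (fuv (u,v) ⬝ᵥ Fv (u,v))) u := by
    intro u v
    have h := (hFv_du u v).dot3 (hFv_du u v)
    convert h using 1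
    rw [dotProduct_comm (Fv (u,v))]
    ring
  have hhh_dv : ∀ u v, HasDerivAt (fun y => hh (u, y))
      (fuv (u,v) ⬝ᵥ Fv (u,v) + Fu (u,v) ⬝ᵥ fvv (u,v)) v :=
    fun u v => (hFu_dv u v).dot3 (hFv_dv u v)
  have hgg_dv : ∀ u v, HasDerivAt (fun y => gg (u, y)) (2 * (fvv (u,v) ⬝ᵥ Fv (u,v))) v := by
    intro u v
    have h := (hFv_dv u v).dot3 (hFv_dv u v)
    convert h using 1
    rw [dotProduct_comm (Fv (u,v))]
    ring
  -- derivatives of sqrt gg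
  have hsq_du : ∀ u v, HasDerivAt (fun x => Real.sqrt (gg (x, v)))
      ((fuv (u,v) ⬝ᵥ Fv (u,v)) / Real.sqrt (gg (u,v))) u := by
    intro u v
    have h := (Real.hasDerivAt_sqrt (hggpos u v).ne').comp u (hgg_du u v)
    refine h.congr_deriv ?_
    have hs := (hsgpos u v).ne'
    field_simp
  have hsq_dv : ∀ u v, HasDerivAt (fun y => Real.sqrt (gg (u, y)))
      ((fvv (u,v) ⬝ᵥ Fv (u,v)) / Real.sqrt (gg (u,v))) v := by
    intro u v
    have h := (Real.hasDerivAt_sqrt (hggpos u v).ne').comp v (hgg_dv u v)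
    refine h.congr_deriv ?_
    have hs := (hsgpos u v).ne'
    field_simp
  -- derivative of psi = -(hh/sqrt gg) in v
  have hpsi_dv : ∀ u v, HasDerivAt (fun y => -(hh (u, y) / Real.sqrt (gg (u, y))))
      (-(((fuv (u,v) ⬝ᵥ Fv (u,v) + Fu (u,v) ⬝ᵥ fvv (u,v)) * Real.sqrt (gg (u,v))
        - hh (u,v) * ((fvv (u,v) ⬝ᵥ Fv (u,v)) / Real.sqrt (gg (u,v))))
        / Real.sqrt (gg (u,v)) ^ 2)) v :=
    fun u v => ((hhh_dv u v).div (hsq_dv u v) (hsgpos u v).ne').neg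
  -- derivative of T in v
  have hTder : ∀ u v, HasDerivAt (fun y => T u y)
      ((Real.sqrt (gg (u,v)))⁻¹ • fvv (u,v)
        + (-((fvv (u,v) ⬝ᵥ Fv (u,v)) / Real.sqrt (gg (u,v))) / Real.sqrt (gg (u,v)) ^ 2)
          • Fv (u,v)) v := by
    intro u v
    have hTeq : (fun y => T u y) = fun y => (Real.sqrt (gg (u, y)))⁻¹ • Fv (u, y) := by
      funext y
      rw [hT u y, hfv_eq u y]
    rw [hTeq]
    exact ((hsq_dv u v).inv (hsgpos u v).ne').smul (hFv_dv u v)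
  -- the pointwise divergence identity
  have hmain : ∀ u v, kg u v * W u v =
      -(deriv (fun x => W x v * a x v) u + deriv (fun y => W u y * b u y) v) := by
    intro u v
    have hWaeq : (fun x => W x v * a x v) = fun x => Real.sqrt (gg (x, v)) :=
      funext fun x => hWa x v
    have hWbeq : (fun y => W u y * b u y) = fun y => -(hh (u, y) / Real.sqrt (gg (u, y))) :=
      funext fun y => hWb u y
    rw [hWaeq, hWbeq, (hsq_du u v).deriv, (hpsi_dv u v).deriv]
    rw [hkg u v, hfv_eq u v, (hTder u v).deriv, hng u v, hfu_eq u v, hfv_eq u v]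
    simp only [add_dotProduct, smul_dotProduct, dotProduct_add, dotProduct_smul, smul_eq_mul]
    have e1 : gg (u,v) = Fv (u,v) ⬝ᵥ Fv (u,v) := by simp only [hggdef]
    have e2 : hh (u,v) = Fu (u,v) ⬝ᵥ Fv (u,v) := by simp only [hhhdef]
    rw [← e1, dotProduct_comm (Fv (u,v)) (Fu (u,v)), ← e2,
      dotProduct_comm (fvv (u,v)) (Fu (u,v))]
    obtain ⟨s, hs_eq⟩ : ∃ s, Real.sqrt (gg (u,v)) = s := ⟨_, rfl⟩
    rw [hs_eq]
    have hspos : 0 < s := hs_eq ▸ hsgpos u v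
    have hsne := hspos.ne'
    have hWne := (hWpos u v).ne'
    have hG : gg (u,v) = s ^ 2 := by rw [← hs_eq, hsgsq]
    have hWa' : W u v * a u v = s := by rw [hWa, hs_eq]
    have horth' : a u v * hh (u,v) + b u v * s ^ 2 = 0 := by rw [← hG]; exact horth u v
    have ha2 : a u v = s / W u v := by rw [eq_div_iff hWne]; linear_combination hWa'
    have hb2 : b u v = -(hh (u,v) / (s * W u v)) := by
      rw [← neg_div, eq_div_iff (mul_ne_zero hsne hWne)]
      have h5 : s * (b u v * (s * W u v) + hh (u,v)) = 0 := by
        linear_combination W u v * horth' - hh (u,v) * hWa'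
      rcases mul_eq_zero.1 h5 with h | h
      · exact absurd h hsne
      · linarith
    rw [hG, ha2, hb2]
    field_simp
    ring
  refine ⟨hmain, ?_⟩
  -- the flux functions q (u-direction) and r (v-direction) and their continuity
  set q : ℝ × ℝ → ℝ := fun p => (fuv p ⬝ᵥ Fv p) / Real.sqrt (gg p) with hqdef
  set r : ℝ × ℝ → ℝ := fun p =>
    -(((fuv p ⬝ᵥ Fv p + Fu p ⬝ᵥ fvv p) * Real.sqrt (gg p)
      - hh p * ((fvv p ⬝ᵥ Fv p) / Real.sqrt (gg p))) / Real.sqrt (gg p) ^ 2) with hrdef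
  have hFuc : Continuous Fu := hFu1.continuous
  have hFvc : Continuous Fv := hFv1.continuous
  have hfuvc : Continuous fuv := (hFu1.continuous_fderiv one_ne_zero).clm_apply continuous_const
  have hfvvc : Continuous fvv := (hFv1.continuous_fderiv one_ne_zero).clm_apply continuous_const
  have hggc : Continuous gg := continuous_dot3 hFvc hFvc
  have hhhc : Continuous hh := continuous_dot3 hFuc hFvc
  have hsgc : Continuous fun p : ℝ × ℝ => Real.sqrt (gg p) := Real.continuous_sqrt.comp hggc
  have hsgne : ∀ p : ℝ × ℝ, Real.sqrt (gg p) ≠ 0 := fun p => (hsgpos p.1 p.2).ne'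
  have hqc : Continuous q := (continuous_dot3 hfuvc hFvc).div hsgc hsgne
  have hrc : Continuous r := by
    apply Continuous.neg
    apply Continuous.div
    · exact (((continuous_dot3 hfuvc hFvc).add (continuous_dot3 hFuc hfvvc)).mul hsgc).sub
        (hhhc.mul ((continuous_dot3 hfvvc hFvc).div hsgc hsgne))
    · exact hsgc.pow 2
    · exact fun p => pow_ne_zero 2 (hsgne p)
  -- pointwise: kg * W = -(q + r)
  have hkgW : ∀ u v, kg u v * W u v = -(q (u, v) + r (u, v)) := by
    intro u v
    rw [hmain u v]
    have d1 : deriv (fun x => W x v * a x v) u = q (u, v) := by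
      rw [show (fun x => W x v * a x v) = fun x => Real.sqrt (gg (x, v)) from
        funext fun x => hWa x v]
      exact (hsq_du u v).deriv
    have d2 : deriv (fun y => W u y * b u y) v = r (u, v) := by
      rw [show (fun y => W u y * b u y) = fun y => -(hh (u, y) / Real.sqrt (gg (u, y))) from
        funext fun y => hWb u y]
      exact (hpsi_dv u v).deriv
    rw [d1, d2]
  -- periodicity of Fu, Fv, gg, hh
  have hFvper_u : ∀ u v, Fv (u + 2 * π, v) = Fv (u, v) := by
    intro u v
    have hfeq : f (u + 2 * π) = f u := funext fun y => hfu u y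
    rw [← hfv_eq u v, ← hfv_eq (u + 2 * π) v, hfeq]
  have hFuper_v : ∀ u v, Fu (u, v + 2 * π) = Fu (u, v) := by
    intro u v
    have hfeq : (fun x => f x (v + 2 * π)) = fun x => f x v := funext fun x => hfv x v
    rw [← hfu_eq u v, ← hfu_eq u (v + 2 * π), hfeq]
  have hFvper_v : ∀ u v, Fv (u, v + 2 * π) = Fv (u, v) := by
    intro u v
    have h1 : HasDerivAt (f u) (Fv (u, v + 2 * π)) (v + 2 * π) := hdv u (v + 2 * π)
    have h2 : HasDerivAt (fun y => f u (y + 2 * π)) ((1:ℝ) • Fv (u, v + 2 * π)) v :=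
      h1.scomp v ((hasDerivAt_id v).add_const (2 * π))
    rw [show (fun y => f u (y + 2 * π)) = f u from funext fun y => hfv u y] at h2
    simpa using h2.unique (hdv u v)
  have hggper_u : ∀ u v, gg (u + 2 * π, v) = gg (u, v) := by
    intro u v
    simp only [hggdef]
    rw [hFvper_u]
  have hggper_v : ∀ u v, gg (u, v + 2 * π) = gg (u, v) := by
    intro u v
    simp only [hggdef]
    rw [hFvper_v]
  have hhhper_v : ∀ u v, hh (u, v + 2 * π) = hh (u, v) := by
    intro u v
    simp only [hhhdef]
    rw [hFvper_v, hFuper_v]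
  -- FTC in each direction
  have hint_r : ∀ u, (∫ v in (0:ℝ)..(2 * π), r (u, v)) = 0 := by
    intro u
    have hcont : IntervalIntegrable (fun v => r (u, v)) MeasureTheory.volume 0 (2 * π) :=
      (hrc.comp (Continuous.prodMk_right u)).intervalIntegrable 0 (2 * π)
    rw [intervalIntegral.integral_eq_sub_of_hasDerivAt (fun v _ => hpsi_dv u v) hcont]
    rw [show (2 * π : ℝ) = 0 + 2 * π by ring, hhhper_v u 0, hggper_v u 0]
    ring
  have hint_q : ∀ v, (∫ u in (0:ℝ)..(2 * π), q (u, v)) = 0 := by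
    intro v
    have hcont : IntervalIntegrable (fun u => q (u, v)) MeasureTheory.volume 0 (2 * π) :=
      (hqc.comp (continuous_id.prodMk continuous_const)).intervalIntegrable 0 (2 * π)
    rw [intervalIntegral.integral_eq_sub_of_hasDerivAt (fun u _ => hsq_du u v) hcont]
    rw [show (2 * π : ℝ) = 0 + 2 * π by ring, hggper_u 0 v]
    ring
  -- assemble
  have inner : ∀ u, (∫ v in (0:ℝ)..(2 * π), kg u v * W u v)
      = -∫ v in (0:ℝ)..(2 * π), q (u, v) := by
    intro u
    have hq_int : IntervalIntegrable (fun v => q (u, v)) MeasureTheory.volume 0 (2 * π) :=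
      (hqc.comp (Continuous.prodMk_right u)).intervalIntegrable 0 (2 * π)
    have hr_int : IntervalIntegrable (fun v => r (u, v)) MeasureTheory.volume 0 (2 * π) :=
      (hrc.comp (Continuous.prodMk_right u)).intervalIntegrable 0 (2 * π)
    calc (∫ v in (0:ℝ)..(2 * π), kg u v * W u v)
        = ∫ v in (0:ℝ)..(2 * π), -(q (u, v) + r (u, v)) := by
          simp only [hkgW]
      _ = -∫ v in (0:ℝ)..(2 * π), (q (u, v) + r (u, v)) := intervalIntegral.integral_neg
      _ = -((∫ v in (0:ℝ)..(2 * π), q (u, v)) + ∫ v in (0:ℝ)..(2 * π), r (u, v)) := by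
          rw [intervalIntegral.integral_add hq_int hr_int]
      _ = -∫ v in (0:ℝ)..(2 * π), q (u, v) := by rw [hint_r u, add_zero]
  calc (∫ u in (0:ℝ)..(2 * π), ∫ v in (0:ℝ)..(2 * π), kg u v * W u v)
      = ∫ u in (0:ℝ)..(2 * π), -∫ v in (0:ℝ)..(2 * π), q (u, v) := by
        simp only [inner]
    _ = -∫ u in (0:ℝ)..(2 * π), ∫ v in (0:ℝ)..(2 * π), q (u, v) :=
        intervalIntegral.integral_neg
    _ = -∫ v in (0:ℝ)..(2 * π), ∫ u in (0:ℝ)..(2 * π), q (u, v) := by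
        rw [swap_int3 hqc Real.two_pi_pos.le]
    _ = 0 := by
        simp only [hint_q]
        simp
end

section
/- The polarization condition holds: for any compact oriented embedded surface Σ ⊂ ℝ³ with closed 1-form β_Σ, and any two divergence-free vector fields X_{α₁}, X_{α₂} on ℝ³ tangent to Σ, the momentum vanishes on their bracket: ⟨J(Σ, β_Σ), [X_{α₁}, X_{α₂}]⟩ = ∫_Σ (i_{X_{α₁}} i_{X_{α₂}} μ) ∧ β_Σ = 0. -/
open Real Matrix intervalIntegral

lemma det3 (p q r : Fin 3 → ℝ) :
    Matrix.det (Matrix.of ![p, q, r]) =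
      p 0 * (q 1 * r 2 - q 2 * r 1) - p 1 * (q 0 * r 2 - q 2 * r 0)
        + p 2 * (q 0 * r 1 - q 1 * r 0) := by
  simp [Matrix.det_fin_three]; ring

noncomputable def gbil (c : Fin 3 → ℝ) : (Fin 3 → ℝ) →ₗ[ℝ] (Fin 3 → ℝ) →ₗ[ℝ] ℝ :=
  LinearMap.mk₂ ℝ (fun v w => Matrix.det (Matrix.of ![v, w, c]))
    (by intro v v' w; simp only [det3, Pi.add_apply]; ring)
    (by intro t v w; simp only [det3, Pi.smul_apply, smul_eq_mul]; ring)
    (by intro v w w'; simp only [det3, Pi.add_apply]; ring)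
    (by intro t v w; simp only [det3, Pi.smul_apply, smul_eq_mul]; ring)

noncomputable def Gbil (c : Fin 3 → ℝ) : (Fin 3 → ℝ) →L[ℝ] (Fin 3 → ℝ) →L[ℝ] ℝ :=
  LinearMap.toContinuousLinearMap
    { toFun := fun v => LinearMap.toContinuousLinearMap (gbil c v)
      map_add' := by intro v v'; ext w; simp [gbil]
      map_smul' := by intro t v; ext w; simp [gbil] }

lemma Gbil_apply (c v w : Fin 3 → ℝ) : Gbil c v w = Matrix.det (Matrix.of ![v, w, c]) := rfl

lemma expand_clm (C : (Fin 3 → ℝ) →L[ℝ] (Fin 3 → ℝ)) (w : Fin 3 → ℝ) :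
    C w = w 0 • C (Pi.single 0 1) + w 1 • C (Pi.single 1 1) + w 2 • C (Pi.single 2 1) := by
  have hw : w = w 0 • (Pi.single 0 1 : Fin 3 → ℝ) + w 1 • (Pi.single 1 1 : Fin 3 → ℝ)
      + w 2 • (Pi.single 2 1 : Fin 3 → ℝ) := by
    funext j; fin_cases j <;> simp [Pi.single_apply]
  conv_lhs => rw [hw]
  simp

lemma det_span_zero {a b x y z : Fin 3 → ℝ}
    (hx : x ∈ Submodule.span ℝ ({a, b} : Set (Fin 3 → ℝ)))
    (hy : y ∈ Submodule.span ℝ ({a, b} : Set (Fin 3 → ℝ)))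
    (hz : z ∈ Submodule.span ℝ ({a, b} : Set (Fin 3 → ℝ))) :
    Matrix.det (Matrix.of ![x, y, z]) = 0 := by
  rw [Submodule.mem_span_pair] at hx hy hz
  obtain ⟨c1, d1, hx⟩ := hx
  obtain ⟨c2, d2, hy⟩ := hy
  obtain ⟨c3, d3, hz⟩ := hz
  rw [det3, ← hx, ← hy, ← hz]
  simp only [Pi.add_apply, Pi.smul_apply, smul_eq_mul]
  ring

/-- polarization condition: for divergence-free vector fields
`u₁ = X_{α₁}`, `u₂ = X_{α₂}` on `ℝ³`, `i_{u₁} i_{u₂} μ` is a potential 1-form of the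
bracket, i.e. `d(i_{u₁} i_{u₂} μ) = i_{[u₁,u₂]} μ` (first clause), so
`⟨J(Σ,β_Σ), [X_{α₁}, X_{α₂}]⟩ = ∫_Σ (i_{X_{α₁}} i_{X_{α₂}} μ) ∧ β_Σ`; and if both fields
are tangent to the compact oriented surface `Σ` (parametrized doubly `2π`-periodically
by `f`, with `β_Σ = β₁ du + β₂ dv`), this integral vanishes (second clause). Here
`(i_{u₁} i_{u₂} μ)(w) = det(u₂, u₁, w)`. -/
theorem stmt_13 :
    (∀ u₁ u₂ : (Fin 3 → ℝ) → (Fin 3 → ℝ), ContDiff ℝ (⊤ : ℕ∞) u₁ → ContDiff ℝ (⊤ : ℕ∞) u₂ →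
      (∀ x, (∑ i : Fin 3, fderiv ℝ u₁ x (Pi.single i 1) i) = 0) →
      (∀ x, (∑ i : Fin 3, fderiv ℝ u₂ x (Pi.single i 1) i) = 0) →
      ∀ x a b : Fin 3 → ℝ,
        fderiv ℝ (fun y => Matrix.det (Matrix.of ![u₂ y, u₁ y, b])) x a -
          fderiv ℝ (fun y => Matrix.det (Matrix.of ![u₂ y, u₁ y, a])) x b =
        Matrix.det (Matrix.of ![fderiv ℝ u₂ x (u₁ x) - fderiv ℝ u₁ x (u₂ x), a, b])) ∧
    (∀ (f : ℝ → ℝ → Fin 3 → ℝ) (β₁ β₂ : ℝ → ℝ → ℝ)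
      (u₁ u₂ : (Fin 3 → ℝ) → (Fin 3 → ℝ)),
      ContDiff ℝ (⊤ : ℕ∞) (fun p : ℝ × ℝ => f p.1 p.2) →
      (∀ u v, f (u + 2 * π) v = f u v) → (∀ u v, f u (v + 2 * π) = f u v) →
      Continuous (fun p : ℝ × ℝ => β₁ p.1 p.2) →
      Continuous (fun p : ℝ × ℝ => β₂ p.1 p.2) →
      (∀ u v, u₁ (f u v) ∈ Submodule.span ℝ
        ({deriv (fun x => f x v) u, deriv (f u) v} : Set (Fin 3 → ℝ))) →
      (∀ u v, u₂ (f u v) ∈ Submodule.span ℝ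
        ({deriv (fun x => f x v) u, deriv (f u) v} : Set (Fin 3 → ℝ))) →
      (∫ u in (0:ℝ)..(2 * π), ∫ v in (0:ℝ)..(2 * π),
        (Matrix.det (Matrix.of ![u₂ (f u v), u₁ (f u v), deriv (fun x => f x v) u]) *
            β₂ u v -
          Matrix.det (Matrix.of ![u₂ (f u v), u₁ (f u v), deriv (f u) v]) *
            β₁ u v)) = 0)  := by
  constructor
  · intro u₁ u₂ h₁ h₂ hd₁ hd₂ x a b
    have hdu₁ : DifferentiableAt ℝ u₁ x := (h₁.differentiable (by simp) x)
    have hdu₂ : DifferentiableAt ℝ u₂ x := (h₂.differentiable (by simp) x)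
    have key : ∀ c : Fin 3 → ℝ,
        fderiv ℝ (fun y => Matrix.det (Matrix.of ![u₂ y, u₁ y, c])) x =
        (Gbil c).precompR _ (u₂ x) (fderiv ℝ u₁ x)
          + (Gbil c).precompL _ (fderiv ℝ u₂ x) (u₁ x) := by
      intro c
      have := (Gbil c).fderiv_of_bilinear (f := u₂) (g := u₁) hdu₂ hdu₁
      simpa [Gbil_apply] using this
    rw [key a, key b]
    simp only [ContinuousLinearMap.add_apply, ContinuousLinearMap.precompR_apply,
      ContinuousLinearMap.precompL_apply, ContinuousLinearMap.comp_apply,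
      ContinuousLinearMap.flip_apply, ContinuousLinearMap.compL_apply, Gbil_apply]
    set A := fderiv ℝ u₂ x with hA
    set B := fderiv ℝ u₁ x with hB
    have htrA : A (Pi.single 0 1) 0 + A (Pi.single 1 1) 1 + A (Pi.single 2 1) 2 = 0 := by
      simpa [Fin.sum_univ_three] using hd₂ x
    have htrB : B (Pi.single 0 1) 0 + B (Pi.single 1 1) 1 + B (Pi.single 2 1) 2 = 0 := by
      simpa [Fin.sum_univ_three] using hd₁ x
    rw [expand_clm A a, expand_clm A b, expand_clm A (u₁ x),
        expand_clm B a, expand_clm B b, expand_clm B (u₂ x)]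
    simp only [det3, Pi.add_apply, Pi.smul_apply, Pi.sub_apply, smul_eq_mul]
    linear_combination
      (a 0 * (u₁ x 1 * b 2 - u₁ x 2 * b 1) - a 1 * (u₁ x 0 * b 2 - u₁ x 2 * b 0)
        + a 2 * (u₁ x 0 * b 1 - u₁ x 1 * b 0)) * htrA +
      (u₂ x 0 * (a 1 * b 2 - a 2 * b 1) - u₂ x 1 * (a 0 * b 2 - a 2 * b 0)
        + u₂ x 2 * (a 0 * b 1 - a 1 * b 0)) * htrB
  · intro f β₁ β₂ u₁ u₂ hf hp1 hp2 hβ₁ hβ₂ ht₁ ht₂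
    have h0 : ∀ u v : ℝ,
        (Matrix.det (Matrix.of ![u₂ (f u v), u₁ (f u v), deriv (fun x => f x v) u]) * β₂ u v -
          Matrix.det (Matrix.of ![u₂ (f u v), u₁ (f u v), deriv (f u) v]) * β₁ u v) = 0 := by
      intro u v
      have hmem1 : deriv (fun x => f x v) u ∈ Submodule.span ℝ
          ({deriv (fun x => f x v) u, deriv (f u) v} : Set (Fin 3 → ℝ)) :=
        Submodule.subset_span (Set.mem_insert _ _)
      have hmem2 : deriv (f u) v ∈ Submodule.span ℝ
          ({deriv (fun x => f x v) u, deriv (f u) v} : Set (Fin 3 → ℝ)) :=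
        Submodule.subset_span (Set.mem_insert_of_mem _ rfl)
      rw [det_span_zero (ht₂ u v) (ht₁ u v) hmem1, det_span_zero (ht₂ u v) (ht₁ u v) hmem2]
      ring
    simp only [h0, intervalIntegral.integral_zero]
end
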